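/- Every element of B_n other than c^{-1} has at most 2n-2 antiexceedances, where c is the 2n-cycle (-1, -2, ..., -n, 1, 2, ..., n). -/

import Mathlib

/- We model `±[n]` by `Fin (2*n)`: index `k < n` represents `-(k+1)`, index `n + k`
represents `k+1`; the order on `Fin (2*n)` is `-1 ≺ ⋯ ≺ -n ≺ 1 ≺ ⋯ ≺ n`.
Negation is addition of `n` mod `2n`, i.e. the permutation `(finRotate (2*n))^n`. -/

/-- Negation on `±[n]`, as a permutation of `Fin (2*n)`. -/
def negPerm (n : ℕ) : Equiv.Perm (Fin (2 * n)) := (finRotate (2 * n)) ^ n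

/-- `w` is a signed permutation (element of `B_n`): `w(-i) = -w(i)`. -/
def isSigned (n : ℕ) (w : Equiv.Perm (Fin (2 * n))) : Prop :=
  ∀ i, w (negPerm n i) = negPerm n (w i)

/-- The set of antiexceedances: elements `i` with `i < w⁻¹ i`. -/
def aexc {m : ℕ} (w : Equiv.Perm (Fin m)) : Finset (Fin m) :=
  Finset.univ.filter fun i => i < w⁻¹ i

/-! The last element of `Fin m` is never an antiexceedance, so at most `m - 1` elements are.
If all the others are, then `w⁻¹` moves every element except the last one up; as `w⁻¹`
preserves the sum of the values, it must move each of them up by exactly one, i.e.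
`w⁻¹` is the rotation `finRotate m`. -/

open Finset Equiv

lemma eq_finRotate_of_forall_lt_apply {m : ℕ} (σ : Perm (Fin (m + 1)))
    (h : ∀ i, i ≠ Fin.last m → i < σ i) : σ = finRotate (m + 1) := by
  have hle : ∀ i ∈ (univ : Finset (Fin (m + 1))), (finRotate (m + 1) i : ℕ) ≤ σ i := by
    intro i _
    rcases eq_or_ne i (Fin.last m) with rfl | hi
    · simp
    · rw [finRotate_apply, Fin.val_add_one_of_lt (Fin.lt_last_iff_ne_last.2 hi)]
      exact h i hi
  have hsum : ∑ i, (finRotate (m + 1) i : ℕ) = ∑ i, (σ i : ℕ) := by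
    rw [Equiv.sum_comp (finRotate (m + 1)) (fun i => (i : ℕ)),
      Equiv.sum_comp σ (fun i => (i : ℕ))]
  ext i
  exact ((sum_eq_sum_iff_of_le hle).mp hsum i (mem_univ i)).symm

lemma last_notMem_aexc {m : ℕ} (w : Perm (Fin (m + 1))) : Fin.last m ∉ aexc w := by
  simp [aexc, Fin.le_last]

theorem card_aexc_le_sub_two {m : ℕ} (w : Perm (Fin m)) (hw : w ≠ (finRotate m)⁻¹) :
    #(aexc w) ≤ m - 2 := by
  cases m with
  | zero => simp [eq_empty_of_isEmpty]
  | succ m =>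
    have hsub : aexc w ⊆ univ.erase (Fin.last m) := fun i hi =>
      mem_erase.2 ⟨ne_of_mem_of_not_mem hi (last_notMem_aexc w), mem_univ i⟩
    by_contra hlt
    have heq : aexc w = univ.erase (Fin.last m) :=
      eq_of_subset_of_card_le hsub (by
        simp only [mem_univ, card_erase_of_mem, card_univ, Fintype.card_fin, add_tsub_cancel_right]
        omega)
    refine hw (inv_eq_iff_eq_inv.mp (eq_finRotate_of_forall_lt_apply w⁻¹ fun i hi => ?_))
    have hmem : i ∈ aexc w := heq ▸ mem_erase.2 ⟨hi, mem_univ i⟩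
    exact (mem_filter.1 hmem).2

theorem aexc_B_le_of_ne_general (n : ℕ) (w : Equiv.Perm (Fin (2 * n)))
    (hne : w ≠ (finRotate (2 * n))⁻¹) :
    (aexc w).card ≤ 2 * n - 2 :=
  card_aexc_le_sub_two w hne

/-- Every element of `B_n` other than `c⁻¹` has at most `2n - 2` antiexceedances,
where `c` is the `2n`-cycle `(-1, -2, …, -n, 1, …, n)` (i.e. `finRotate (2*n)`). -/
theorem aexc_B_le_of_ne (n : ℕ) (hn : 1 ≤ n) (w : Equiv.Perm (Fin (2 * n)))
    (hw : isSigned n w) (hne : w ≠ (finRotate (2 * n))⁻¹) :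
    (aexc w).card ≤ 2 * n - 2 :=
  aexc_B_le_of_ne_general n w hne
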